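/- For value-conscious customers, a revenue-ordered set is optimal for the cardinality-constrained BundleMVL-2 problem: for any d > 0, there exists an index m ≤ d such that A_m = {1,…,m} attains max_{|C| ≤ d} R₂(C). Concretely, if C* is optimal with |C*| ≤ d and there exist m < l with m ∉ C*, l ∈ C*, then the swapped set C̃ = (C* \ {l}) ∪ {m} satisfies R₂(C̃) = R₂(C*). -/

import Mathlib

open Finset

/-! The objective is raised by exchanging a product `l` of an assortment for a product `m < l`
outside it: by the value-conscious assumption `m` adds at least as much revenue weight to the
numerator and at most as much preference weight to the denominator as `l` does, with respect to
the remaining products. Repeated exchanges, each lowering the sum of the indices, turn any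
assortment into the revenue-ordered one of the same size, so the best revenue-ordered assortment
of size at most `d` is optimal, and exchanges keep optimal assortments optimal. -/

def pairSum (f : ℕ → ℕ → ℝ) (C : Finset ℕ) : ℝ :=
  ∑ i ∈ C, ∑ j ∈ C.filter (fun j => i < j), f i j

theorem pairSum_insert {f : ℕ → ℕ → ℝ} (hf : ∀ i j, f i j = f j i) {C : Finset ℕ} {x : ℕ}
    (hx : x ∉ C) : pairSum f (insert x C) = pairSum f C + ∑ k ∈ C, f x k := by
  have hsplit : ∀ k ∈ C, f x k = (if k < x then f k x else 0) + if x < k then f x k else 0 := by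
    intro k hk
    rcases lt_or_gt_of_ne (ne_of_mem_of_not_mem hk hx) with h | h
    · simp [h, h.not_gt, hf x k]
    · simp [h, h.not_gt]
  have hinner : ∀ i ∈ C, ∑ j ∈ (insert x C).filter (fun j => i < j), f i j =
      ∑ j ∈ C.filter (fun j => i < j), f i j + if i < x then f i x else 0 := by
    intro i _
    rw [filter_insert]
    split_ifs
    · rw [sum_insert (by simp [hx]), add_comm]
    · rw [add_zero]
  unfold pairSum
  rw [sum_insert hx, filter_insert, if_neg (lt_irrefl x), sum_congr rfl hinner,
    sum_congr rfl hsplit, sum_add_distrib, sum_add_distrib, ← sum_filter, ← sum_filter]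
  ring

theorem pairSum_nonneg {f : ℕ → ℕ → ℝ} {C : Finset ℕ} (hf : ∀ i ∈ C, ∀ j ∈ C, 0 ≤ f i j) :
    0 ≤ pairSum f C :=
  sum_nonneg fun i hi => sum_nonneg fun j hj => hf i hi j (mem_filter.1 hj).1

section Exchange

variable {n : ℕ} {f : Finset ℕ → ℝ}

theorem card_insert_erase {C : Finset ℕ} {m l : ℕ} (hm : m ∉ C) (hl : l ∈ C) :
    #(insert m (C.erase l)) = #C := by
  rw [card_insert_of_notMem fun h => hm (mem_of_mem_erase h), card_erase_add_one hl]

theorem insert_erase_subset_Icc {C : Finset ℕ} (hC : C ⊆ Icc 1 n) {m l : ℕ} (hm : 1 ≤ m)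
    (hml : m < l) (hl : l ∈ C) : insert m (C.erase l) ⊆ Icc 1 n :=
  insert_subset (mem_Icc.2 ⟨hm, hml.le.trans (mem_Icc.1 (hC hl)).2⟩)
    ((erase_subset l C).trans hC)

theorem exists_exchange_of_ne_Icc {C : Finset ℕ} (h0 : 0 ∉ C) (hC : C ≠ Icc 1 #C) :
    ∃ m l, 1 ≤ m ∧ m < l ∧ m ∉ C ∧ l ∈ C := by
  have hcard : #(Icc 1 #C) = #C := by simp
  obtain ⟨l, hlC, hl⟩ := not_subset.1 fun h => hC (eq_of_subset_of_card_le h hcard.le)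
  obtain ⟨m, hm, hmC⟩ := not_subset.1 fun h => hC (eq_of_subset_of_card_le h hcard.ge).symm
  have hl0 : l ≠ 0 := ne_of_mem_of_not_mem hlC h0
  simp only [mem_Icc] at hl hm
  exact ⟨m, l, hm.1, by omega, hmC, hlC⟩

def IsExchangeMonotone (n : ℕ) (f : Finset ℕ → ℝ) : Prop :=
  ∀ C ⊆ Icc 1 n, ∀ m l, 1 ≤ m → m < l → m ∉ C → l ∈ C → f C ≤ f (insert m (C.erase l))

namespace IsExchangeMonotone

theorem le_apply_Icc_card (hf : IsExchangeMonotone n f) {C : Finset ℕ} (hC : C ⊆ Icc 1 n) :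
    f C ≤ f (Icc 1 #C) := by
  induction hs : ∑ i ∈ C, i using Nat.strong_induction_on generalizing C with
  | _ s ih =>
    by_cases hIcc : C = Icc 1 #C
    · rw [← hIcc]
    obtain ⟨m, l, hm, hml, hmC, hlC⟩ :=
      exists_exchange_of_ne_Icc (fun h0 => by simpa using hC h0) hIcc
    have hsum : ∑ i ∈ insert m (C.erase l), i < s := by
      rw [sum_insert fun h => hmC (mem_of_mem_erase h), ← hs, ← sum_erase_add C _ hlC]
      omega
    calc f C ≤ f (insert m (C.erase l)) := hf C hC m l hm hml hmC hlC
      _ ≤ f (Icc 1 #C) := by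
        simpa only [card_insert_erase hmC hlC] using
          ih _ hsum (insert_erase_subset_Icc hC hm hml hlC) rfl

theorem exists_Icc_isMax (hf : IsExchangeMonotone n f) (d : ℕ) :
    ∃ m ≤ d, m ≤ n ∧ ∀ C ⊆ Icc 1 n, #C ≤ d → f C ≤ f (Icc 1 m) := by
  obtain ⟨m, hm, hmax⟩ := (range (min d n + 1)).exists_max_image (fun k => f (Icc 1 k))
    nonempty_range_add_one
  have hmdn : m ≤ min d n := Nat.lt_succ_iff.1 (mem_range.1 hm)
  refine ⟨m, hmdn.trans (min_le_left d n), hmdn.trans (min_le_right d n), fun C hC hCd => ?_⟩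
  have hCn : #C ≤ n := by simpa using card_le_card hC
  exact (hf.le_apply_Icc_card hC).trans
    (hmax #C (mem_range.2 (Nat.lt_succ_of_le (le_min hCd hCn))))

theorem apply_exchange_eq_of_isMax (hf : IsExchangeMonotone n f) {d : ℕ} {C : Finset ℕ}
    (hC : C ⊆ Icc 1 n) (hopt : ∀ C' ⊆ Icc 1 n, #C' ≤ d → f C' ≤ f C) {m l : ℕ} (hm : 1 ≤ m)
    (hml : m < l) (hmC : m ∉ C) (hlC : l ∈ C) (hCd : #C ≤ d) :
    f (insert m (C.erase l)) = f C :=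
  le_antisymm
    (hopt _ (insert_erase_subset_Icc hC hm hml hlC) (by rwa [card_insert_erase hmC hlC]))
    (hf C hC m l hm hml hmC hlC)

end IsExchangeMonotone

end Exchange

structure ValueConscious (n : ℕ) (r V1 : ℕ → ℝ) (V2 : ℕ → ℕ → ℝ) : Prop where
  singleton_weight_mono : ∀ i j, 1 ≤ i → i < j → j ≤ n → V1 i ≤ V1 j
  pair_weight_mono : ∀ i j k, 1 ≤ i → i < j → j ≤ n → k ∈ Icc 1 n → k ≠ i → k ≠ j →
    V2 i k ≤ V2 j k
  singleton_revenue_anti : ∀ i j, 1 ≤ i → i < j → j ≤ n → r j * V1 j ≤ r i * V1 i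
  pair_revenue_anti : ∀ i j k, 1 ≤ i → i < j → j ≤ n → k ∈ Icc 1 n → k ≠ i → k ≠ j →
    (r j + r k) * V2 j k ≤ (r i + r k) * V2 i k

section Revenue

variable (r V1 : ℕ → ℝ) (V2 : ℕ → ℕ → ℝ)

def attraction (C : Finset ℕ) : ℝ :=
  ∑ i ∈ C, V1 i + pairSum V2 C

def weightedRevenue (C : Finset ℕ) : ℝ :=
  ∑ i ∈ C, V1 i * r i + pairSum (fun i j => V2 i j * (r i + r j)) C

noncomputable def expectedRevenue (v0 : ℝ) (C : Finset ℕ) : ℝ :=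
  weightedRevenue r V1 V2 C / (v0 + attraction V1 V2 C)

variable {r V1 V2}

theorem attraction_insert (hV2 : ∀ i j, V2 i j = V2 j i) {C : Finset ℕ} {x : ℕ} (hx : x ∉ C) :
    attraction V1 V2 (insert x C) = attraction V1 V2 C + (V1 x + ∑ k ∈ C, V2 x k) := by
  rw [attraction, attraction, sum_insert hx, pairSum_insert hV2 hx]
  ring

theorem weightedRevenue_insert (hV2 : ∀ i j, V2 i j = V2 j i) {C : Finset ℕ} {x : ℕ}
    (hx : x ∉ C) :
    weightedRevenue r V1 V2 (insert x C) =
      weightedRevenue r V1 V2 C + (V1 x * r x + ∑ k ∈ C, V2 x k * (r x + r k)) := by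
  rw [weightedRevenue, weightedRevenue, sum_insert hx,
    pairSum_insert (fun i j => by rw [hV2 i j, add_comm (r i)]) hx]
  ring

theorem attraction_nonneg {C : Finset ℕ} (hV1 : ∀ i ∈ C, 0 ≤ V1 i) (hV2 : ∀ i j, 0 ≤ V2 i j) :
    0 ≤ attraction V1 V2 C :=
  add_nonneg (sum_nonneg hV1) (pairSum_nonneg fun i _ j _ => hV2 i j)

theorem weightedRevenue_nonneg {C : Finset ℕ} (hr : ∀ i ∈ C, 0 ≤ r i) (hV1 : ∀ i ∈ C, 0 ≤ V1 i)
    (hV2 : ∀ i j, 0 ≤ V2 i j) : 0 ≤ weightedRevenue r V1 V2 C :=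
  add_nonneg (sum_nonneg fun i hi => mul_nonneg (hV1 i hi) (hr i hi))
    (pairSum_nonneg fun i hi j hj => mul_nonneg (hV2 i j) (add_nonneg (hr i hi) (hr j hj)))

variable {n : ℕ} {v0 : ℝ}

theorem expectedRevenue_insert_le_insert (hv0 : 0 < v0) (hr : ∀ i ∈ Icc 1 n, 0 ≤ r i)
    (hV1 : ∀ i ∈ Icc 1 n, 0 ≤ V1 i) (hV2nn : ∀ i j, 0 ≤ V2 i j)
    (hV2symm : ∀ i j, V2 i j = V2 j i) (hvc : ValueConscious n r V1 V2) {E : Finset ℕ}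
    (hE : E ⊆ Icc 1 n) {m l : ℕ} (hm : 1 ≤ m) (hml : m < l) (hln : l ≤ n) (hmE : m ∉ E)
    (hlE : l ∉ E) :
    expectedRevenue r V1 V2 v0 (insert l E) ≤ expectedRevenue r V1 V2 v0 (insert m E) := by
  have hmE_sub : insert m E ⊆ Icc 1 n := insert_subset (mem_Icc.2 ⟨hm, by omega⟩) hE
  have hk : ∀ k ∈ E, k ∈ Icc 1 n ∧ k ≠ m ∧ k ≠ l := fun k hk =>
    ⟨hE hk, ne_of_mem_of_not_mem hk hmE, ne_of_mem_of_not_mem hk hlE⟩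
  have hgain : V1 l * r l + ∑ k ∈ E, V2 l k * (r l + r k) ≤
      V1 m * r m + ∑ k ∈ E, V2 m k * (r m + r k) := by
    refine add_le_add (by linarith [hvc.singleton_revenue_anti m l hm hml hln])
      (sum_le_sum fun k hkE => ?_)
    obtain ⟨hkI, hkm, hkl⟩ := hk k hkE
    linarith [hvc.pair_revenue_anti m l k hm hml hln hkI hkm hkl]
  have hcost : V1 m + ∑ k ∈ E, V2 m k ≤ V1 l + ∑ k ∈ E, V2 l k := by
    refine add_le_add (hvc.singleton_weight_mono m l hm hml hln) (sum_le_sum fun k hkE => ?_)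
    obtain ⟨hkI, hkm, hkl⟩ := hk k hkE
    exact hvc.pair_weight_mono m l k hm hml hln hkI hkm hkl
  have hattr := attraction_nonneg (fun i hi => hV1 i (hmE_sub hi)) hV2nn
  refine div_le_div₀ (weightedRevenue_nonneg (fun i hi => hr i (hmE_sub hi))
    (fun i hi => hV1 i (hmE_sub hi)) hV2nn) ?_ (by linarith) ?_
  · rw [weightedRevenue_insert hV2symm hlE, weightedRevenue_insert hV2symm hmE]
    linarith
  · rw [attraction_insert hV2symm hlE, attraction_insert hV2symm hmE]
    linarith

theorem isExchangeMonotone_expectedRevenue (hv0 : 0 < v0) (hr : ∀ i ∈ Icc 1 n, 0 ≤ r i)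
    (hV1 : ∀ i ∈ Icc 1 n, 0 ≤ V1 i) (hV2nn : ∀ i j, 0 ≤ V2 i j)
    (hV2symm : ∀ i j, V2 i j = V2 j i) (hvc : ValueConscious n r V1 V2) :
    IsExchangeMonotone n (expectedRevenue r V1 V2 v0) := by
  intro C hC m l hm hml hmC hlC
  have hE : C.erase l ⊆ Icc 1 n := (erase_subset l C).trans hC
  simpa only [insert_erase hlC] using
    expectedRevenue_insert_le_insert hv0 hr hV1 hV2nn hV2symm hvc hE hm hml
      (mem_Icc.1 (hC hlC)).2 (fun h => hmC (mem_of_mem_erase h)) (notMem_erase l C)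

end Revenue

theorem value_conscious_revenue_ordered_optimal_general (n d : ℕ)
    (r V1 : ℕ → ℝ) (V2 : ℕ → ℕ → ℝ) (v0 : ℝ) (hv0 : 0 < v0)
    (hr : ∀ i ∈ Finset.Icc 1 n, 0 < r i)
    (hV1 : ∀ i ∈ Finset.Icc 1 n, 0 < V1 i)
    (hV2nn : ∀ i j, 0 ≤ V2 i j)
    (hV2symm : ∀ i j, V2 i j = V2 j i)
    (hva1 : ∀ i j, 1 ≤ i → i < j → j ≤ n → V1 i ≤ V1 j)
    (hva2 : ∀ i j k, 1 ≤ i → i < j → j ≤ n → k ∈ Finset.Icc 1 n → k ≠ i → k ≠ j →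
      V2 i k ≤ V2 j k)
    (hvb1 : ∀ i j, 1 ≤ i → i < j → j ≤ n → r j * V1 j ≤ r i * V1 i)
    (hvb2 : ∀ i j k, 1 ≤ i → i < j → j ≤ n → k ∈ Finset.Icc 1 n → k ≠ i → k ≠ j →
      (r j + r k) * V2 j k ≤ (r i + r k) * V2 i k)
    (R2 : Finset ℕ → ℝ)
    (hR2 : ∀ C, R2 C =
      ((∑ i ∈ C, V1 i * r i) + ∑ i ∈ C, ∑ j ∈ C.filter (fun j => i < j), V2 i j * (r i + r j)) /
      (v0 + (∑ i ∈ C, V1 i) + ∑ i ∈ C, ∑ j ∈ C.filter (fun j => i < j), V2 i j)) :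
    (∃ m, m ≤ d ∧ m ≤ n ∧
      ∀ C ⊆ Finset.Icc 1 n, C.card ≤ d → R2 C ≤ R2 (Finset.Icc 1 m)) ∧
    (∀ Cs ⊆ Finset.Icc 1 n, Cs.card ≤ d →
      (∀ C ⊆ Finset.Icc 1 n, C.card ≤ d → R2 C ≤ R2 Cs) →
      ∀ m l, 1 ≤ m → m < l → l ≤ n → m ∉ Cs → l ∈ Cs →
        R2 (insert m (Cs.erase l)) = R2 Cs) := by
  obtain rfl : R2 = expectedRevenue r V1 V2 v0 := funext fun C => by
    rw [hR2, expectedRevenue, weightedRevenue, attraction, pairSum, pairSum, add_assoc]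
  have hf : IsExchangeMonotone n (expectedRevenue r V1 V2 v0) :=
    isExchangeMonotone_expectedRevenue hv0 (fun i hi => (hr i hi).le) (fun i hi => (hV1 i hi).le)
      hV2nn hV2symm ⟨hva1, hva2, hvb1, hvb2⟩
  exact ⟨hf.exists_Icc_isMax d, fun Cs hCs hCsd hopt m l hm hml _ hmC hlC =>
    hf.apply_exchange_eq_of_isMax hCs hopt hm hml hmC hlC hCsd⟩

/-- For value-conscious customers, a revenue-ordered set is optimal for the
cardinality-constrained BundleMVL-2 problem; moreover swapping any product of an optimal set
for a cheaper-indexed (higher-revenue) product outside it preserves the optimal revenue. -/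
theorem value_conscious_revenue_ordered_optimal (n d : ℕ) (hd : 0 < d)
    (r V1 : ℕ → ℝ) (V2 : ℕ → ℕ → ℝ) (v0 : ℝ) (hv0 : 0 < v0)
    (hr : ∀ i ∈ Finset.Icc 1 n, 0 < r i)
    (hsort : ∀ i j, 1 ≤ i → i ≤ j → j ≤ n → r j ≤ r i)
    (hV1 : ∀ i ∈ Finset.Icc 1 n, 0 < V1 i)
    (hV2nn : ∀ i j, 0 ≤ V2 i j)
    (hV2symm : ∀ i j, V2 i j = V2 j i)
    (hva1 : ∀ i j, 1 ≤ i → i < j → j ≤ n → V1 i ≤ V1 j)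
    (hva2 : ∀ i j k, 1 ≤ i → i < j → j ≤ n → k ∈ Finset.Icc 1 n → k ≠ i → k ≠ j →
      V2 i k ≤ V2 j k)
    (hvb1 : ∀ i j, 1 ≤ i → i < j → j ≤ n → r j * V1 j ≤ r i * V1 i)
    (hvb2 : ∀ i j k, 1 ≤ i → i < j → j ≤ n → k ∈ Finset.Icc 1 n → k ≠ i → k ≠ j →
      (r j + r k) * V2 j k ≤ (r i + r k) * V2 i k)
    (R2 : Finset ℕ → ℝ)
    (hR2 : ∀ C, R2 C =
      ((∑ i ∈ C, V1 i * r i) + ∑ i ∈ C, ∑ j ∈ C.filter (fun j => i < j), V2 i j * (r i + r j)) /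
      (v0 + (∑ i ∈ C, V1 i) + ∑ i ∈ C, ∑ j ∈ C.filter (fun j => i < j), V2 i j)) :
    (∃ m, m ≤ d ∧ m ≤ n ∧
      ∀ C ⊆ Finset.Icc 1 n, C.card ≤ d → R2 C ≤ R2 (Finset.Icc 1 m)) ∧
    (∀ Cs ⊆ Finset.Icc 1 n, Cs.card ≤ d →
      (∀ C ⊆ Finset.Icc 1 n, C.card ≤ d → R2 C ≤ R2 Cs) →
      ∀ m l, 1 ≤ m → m < l → l ≤ n → m ∉ Cs → l ∈ Cs →
        R2 (insert m (Cs.erase l)) = R2 Cs) :=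
  value_conscious_revenue_ordered_optimal_general n d r V1 V2 v0 hv0 hr hV1 hV2nn hV2symm hva1 hva2
    hvb1 hvb2 R2 hR2
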